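/- In the or-gadget (as defined), every subgraph obtained by deleting at most one arc contains a directed cycle, but deleting the two arcs e₂ = v₂ᵃ → v₂ᵇ and e₃ = v₃ᵃ → v₃ᵇ yields an acyclic digraph. -/
import Mathlib


/-- The vertices of the or-gadget: six terminals and six non-terminals. -/
inductive OrV : Type
  | x1 | x1' | x2 | x2' | x3 | x3'
  | v1a | v1b | v2a | v2b | v3a | v3b
deriving DecidableEq

open OrV

/-- The arcs of the or-gadget. -/
def orEdges : List (OrV × OrV) :=
  [(x1, v1a), (v1b, x1'), (x2, v2a), (v2b, x2'), (x3, v3a), (v3b, x3'),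
   (v1a, v1b), (v2a, v2b), (v3a, v3b),
   (v1b, v2a), (v2b, v3a), (v3b, v1a),
   (v1b, v3a), (v2b, v1a), (v3b, v2a)]

def orE (a b : OrV) : Prop := (a, b) ∈ orEdges

def nonTerminal : Set OrV := {v1a, v1b, v2a, v2b, v3a, v3b}

def terminal : Set OrV := {x1, x1', x2, x2', x3, x3'}

instance : Nonempty OrV := ⟨OrV.x1⟩

instance (a b : OrV) : Decidable (orE a b) := by unfold orE; infer_instance

private lemma cycle4 {r : OrV → OrV → Prop} {a b c d : OrV}
    (h1 : r a b) (h2 : r b c) (h3 : r c d) (h4 : r d a) : Relation.TransGen r a a :=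
  (((Relation.TransGen.single h1).tail h2).tail h3).tail h4

private lemma cycC1 {F : Finset (OrV × OrV)}
    (h : ∀ q ∈ ([(v1a, v1b), (v1b, v2a), (v2a, v2b), (v2b, v1a)] : List (OrV × OrV)), q ∉ F) :
    ∃ v : OrV, Relation.TransGen (fun a b => orE a b ∧ (a, b) ∉ F) v v :=
  ⟨v1a, cycle4 (b := v1b) (c := v2a) (d := v2b) ⟨by decide, h _ (by simp)⟩
    ⟨by decide, h _ (by simp)⟩ ⟨by decide, h _ (by simp)⟩ ⟨by decide, h _ (by simp)⟩⟩

private lemma cycC2 {F : Finset (OrV × OrV)}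
    (h : ∀ q ∈ ([(v2a, v2b), (v2b, v3a), (v3a, v3b), (v3b, v2a)] : List (OrV × OrV)), q ∉ F) :
    ∃ v : OrV, Relation.TransGen (fun a b => orE a b ∧ (a, b) ∉ F) v v :=
  ⟨v2a, cycle4 (b := v2b) (c := v3a) (d := v3b) ⟨by decide, h _ (by simp)⟩
    ⟨by decide, h _ (by simp)⟩ ⟨by decide, h _ (by simp)⟩ ⟨by decide, h _ (by simp)⟩⟩

private lemma cycC3 {F : Finset (OrV × OrV)}
    (h : ∀ q ∈ ([(v1a, v1b), (v1b, v3a), (v3a, v3b), (v3b, v1a)] : List (OrV × OrV)), q ∉ F) :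
    ∃ v : OrV, Relation.TransGen (fun a b => orE a b ∧ (a, b) ∉ F) v v :=
  ⟨v1a, cycle4 (b := v1b) (c := v3a) (d := v3b) ⟨by decide, h _ (by simp)⟩
    ⟨by decide, h _ (by simp)⟩ ⟨by decide, h _ (by simp)⟩ ⟨by decide, h _ (by simp)⟩⟩

/-- A height function witnessing acyclicity after deleting e₂ and e₃. -/
private def ht : OrV → ℕ
  | x1 => 0 | x2 => 0 | x3 => 0 | v2b => 0 | v3b => 0
  | v1a => 1 | x2' => 1 | x3' => 1
  | v1b => 2
  | v2a => 3 | v3a => 3 | x1' => 3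

private lemma ht_mono : ∀ a b : OrV,
    (orE a b ∧ (a, b) ≠ (v2a, v2b) ∧ (a, b) ≠ (v3a, v3b)) → ht a < ht b := by
  intro a b ⟨h1, h2, h3⟩
  cases a <;> cases b <;> simp_all [orE, orEdges, ht]

/-- Deleting at most one arc from the or-gadget leaves a directed cycle, but deleting the
two arcs `e₂ = v2a → v2b` and `e₃ = v3a → v3b` yields an acyclic digraph. -/
theorem orGadget_arc_deletions :
    (∀ F : Finset (OrV × OrV), ↑F ⊆ {p : OrV × OrV | orE p.1 p.2} → F.card ≤ 1 →
      ∃ v : OrV, Relation.TransGen (fun a b => orE a b ∧ (a, b) ∉ F) v v) ∧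
    (∀ v : OrV, ¬ Relation.TransGen
      (fun a b => orE a b ∧ (a, b) ≠ (v2a, v2b) ∧ (a, b) ≠ (v3a, v3b)) v v) := by
  constructor
  · intro F hsub hcard
    rcases Finset.card_le_one_iff_subset_singleton.mp hcard with ⟨p, hp⟩
    by_cases hpF : p ∈ F
    · have hpe : orE p.1 p.2 := hsub hpF
      have hF : ∀ q : OrV × OrV, q ≠ p → q ∉ F :=
        fun q hq hqF => hq (Finset.mem_singleton.mp (hp hqF))
      obtain ⟨a, b⟩ := p
      simp only [orE, orEdges, List.mem_cons, List.not_mem_nil, or_false,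
        Prod.mk.injEq] at hpe
      rcases hpe with ⟨rfl, rfl⟩ | ⟨rfl, rfl⟩ | ⟨rfl, rfl⟩ | ⟨rfl, rfl⟩ | ⟨rfl, rfl⟩ |
        ⟨rfl, rfl⟩ | ⟨rfl, rfl⟩ | ⟨rfl, rfl⟩ | ⟨rfl, rfl⟩ | ⟨rfl, rfl⟩ | ⟨rfl, rfl⟩ |
        ⟨rfl, rfl⟩ | ⟨rfl, rfl⟩ | ⟨rfl, rfl⟩ | ⟨rfl, rfl⟩
      · exact cycC1 (fun q hq => hF q (by rintro rfl; simp at hq))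
      · exact cycC1 (fun q hq => hF q (by rintro rfl; simp at hq))
      · exact cycC1 (fun q hq => hF q (by rintro rfl; simp at hq))
      · exact cycC1 (fun q hq => hF q (by rintro rfl; simp at hq))
      · exact cycC1 (fun q hq => hF q (by rintro rfl; simp at hq))
      · exact cycC1 (fun q hq => hF q (by rintro rfl; simp at hq))
      · exact cycC2 (fun q hq => hF q (by rintro rfl; simp at hq))
      · exact cycC3 (fun q hq => hF q (by rintro rfl; simp at hq))
      · exact cycC1 (fun q hq => hF q (by rintro rfl; simp at hq))
      · exact cycC2 (fun q hq => hF q (by rintro rfl; simp at hq))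
      · exact cycC1 (fun q hq => hF q (by rintro rfl; simp at hq))
      · exact cycC1 (fun q hq => hF q (by rintro rfl; simp at hq))
      · exact cycC1 (fun q hq => hF q (by rintro rfl; simp at hq))
      · exact cycC2 (fun q hq => hF q (by rintro rfl; simp at hq))
      · exact cycC1 (fun q hq => hF q (by rintro rfl; simp at hq))
    · have hF : ∀ q : OrV × OrV, q ∉ F := fun q hqF =>
        hpF ((Finset.mem_singleton.mp (hp hqF)) ▸ hqF)
      exact cycC1 (fun q _ => hF q)
  · intro v hT
    have key : ∀ a b : OrV, Relation.TransGen
        (fun a b => orE a b ∧ (a, b) ≠ (v2a, v2b) ∧ (a, b) ≠ (v3a, v3b)) a b →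
        ht a < ht b := by
      intro a b h
      induction h with
      | single hr => exact ht_mono _ _ hr
      | tail _ hr ih => exact ih.trans (ht_mono _ _ hr)
    exact lt_irrefl _ (key v v hT)
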